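/- Let ℏ > 0 and a > 0. Let v̂ : ℤ² → ℂ satisfy Σ_{μ∈ℤ²} ‖μ‖² |v̂(μ)| < ∞ (where μ ∈ ℤ² is identified with the corresponding vector in ℝ²). Let g : ℝ²×ℝ² → ℂ be Lebesgue integrable, let η : ℝ² → ℂ be measurable and bounded, and let φ : ℝ² → ℂ be twice continuously differentiable with M := sup_{k∈ℝ²} ‖D²φ(k)‖ < ∞ (operator norm of the second derivative as a bilinear map). Then the lattice-sum Taylor-remainder pairing obeys the bound: | Σ_{μ∈ℤ²} v̂(μ) ∫_{ℝ²}∫_{ℝ²} e^{i(μ·x)/a} g(x,k) η(x) · (1/ℏ) [ φ(k − (ℏ/(2a))μ) − φ(k + (ℏ/(2a))μ) + (ℏ/a) (μ·∇φ(k)) ] dx dk | ≤ (ℏ/(4a²)) · ( Σ_{μ∈ℤ²} ‖μ‖² |v̂(μ)| ) · ‖g‖_{L¹} · ‖η‖_{∞} · M. -/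

import Mathlib

/-!
The phase factor has modulus one and `η` is bounded by `Cη`, so each integrand is dominated by
`‖g‖ Cη / ℏ` times the symmetric second-order Taylor remainder
`φ (k - h) - φ (k + h) + 2 φ'(k) h` at `h = (ℏ / (2a)) μ`. Writing it as the difference of the
one-sided remainders at `-h` and `h`, each at most `M ‖h‖² / 2`, it is at most `M ‖h‖²`, which
gives `(ℏ / (4 a²)) ‖μ‖² Cη M ‖g‖` per lattice point; integrating and summing against `|v̂(μ)|`
gives the bound.
-/

open MeasureTheory Complex

noncomputable section

/-- The point of `ℝ²` (with the Euclidean norm) corresponding to a lattice point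
`μ ∈ ℤ²`. -/
def latticeVec (μ : ℤ × ℤ) : EuclideanSpace ℝ (Fin 2) :=
  (WithLp.equiv 2 (Fin 2 → ℝ)).symm ![(μ.1 : ℝ), (μ.2 : ℝ)]

section Taylor

variable {E F : Type*} [NormedAddCommGroup E] [NormedSpace ℝ E]
  [NormedAddCommGroup F] [NormedSpace ℝ F]
  {f : E → F} {M : ℝ}

theorem norm_fderiv_fderiv_eq_norm_iteratedFDeriv_two (f : E → F) (x : E) :
    ‖fderiv ℝ (fderiv ℝ f) x‖ = ‖iteratedFDeriv ℝ 2 f x‖ := by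
  rw [← norm_iteratedFDeriv_one, norm_iteratedFDeriv_fderiv]

theorem norm_fderiv_sub_fderiv_le (hf : ContDiff ℝ 2 f)
    (hM : ∀ x, ‖iteratedFDeriv ℝ 2 f x‖ ≤ M) (x y : E) :
    ‖fderiv ℝ f x - fderiv ℝ f y‖ ≤ M * ‖x - y‖ :=
  convex_univ.norm_image_sub_le_of_norm_fderiv_le
    (fun z _ => (hf.fderiv_right (m := 1) le_rfl).differentiable one_ne_zero z)
    (fun z _ => (norm_fderiv_fderiv_eq_norm_iteratedFDeriv_two f z).trans_le (hM z))
    (Set.mem_univ y) (Set.mem_univ x)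

/-- The proof fences `t ↦ f (x + t • h) - f x - t • f' x h` on `[0, 1]` by
`t ↦ M / 2 * ‖h‖ ^ 2 * t ^ 2`, whose derivative dominates `‖(f' (x + t • h) - f' x) h‖`. -/
theorem norm_image_add_sub_sub_fderiv_le (hf : ContDiff ℝ 2 f)
    (hM : ∀ x, ‖iteratedFDeriv ℝ 2 f x‖ ≤ M) (x h : E) :
    ‖f (x + h) - f x - fderiv ℝ f x h‖ ≤ M / 2 * ‖h‖ ^ 2 := by
  have hdiff : Differentiable ℝ f := hf.differentiable two_ne_zero
  have hpath (t : ℝ) : HasDerivAt (fun t : ℝ => f (x + t • h) - f x - t • fderiv ℝ f x h)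
      (fderiv ℝ f (x + t • h) h - fderiv ℝ f x h) t := by
    have hline : HasDerivAt (fun t : ℝ => x + t • h) h t := by
      simpa using ((hasDerivAt_id t).smul_const h).const_add x
    have := (((hdiff _).hasFDerivAt.comp_hasDerivAt t hline).sub_const (f x)).sub
      ((hasDerivAt_id t).smul_const (fderiv ℝ f x h))
    rwa [one_smul] at this
  have hbound : ∀ t ∈ Set.Ico (0 : ℝ) 1,
      ‖fderiv ℝ f (x + t • h) h - fderiv ℝ f x h‖ ≤ M * ‖h‖ ^ 2 * t := by
    rintro t ⟨ht, -⟩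
    calc ‖fderiv ℝ f (x + t • h) h - fderiv ℝ f x h‖
        ≤ ‖fderiv ℝ f (x + t • h) - fderiv ℝ f x‖ * ‖h‖ :=
          (fderiv ℝ f (x + t • h) - fderiv ℝ f x).le_opNorm h
      _ ≤ M * ‖(x + t • h) - x‖ * ‖h‖ := by
          gcongr; exact norm_fderiv_sub_fderiv_le hf hM _ _
      _ = M * ‖h‖ ^ 2 * t := by
          rw [add_sub_cancel_left, norm_smul, Real.norm_of_nonneg ht]; ring
  have := image_norm_le_of_norm_deriv_right_le_deriv_boundary
    (fun t _ => (hpath t).continuousAt.continuousWithinAt)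
    (fun t _ => (hpath t).hasDerivWithinAt)
    (B := fun t => M / 2 * ‖h‖ ^ 2 * t ^ 2) (by simp)
    (B' := fun t => M * ‖h‖ ^ 2 * t)
    (fun t => ((hasDerivAt_pow 2 t).const_mul _).congr_deriv (by ring))
    hbound (Set.right_mem_Icc.2 zero_le_one)
  simpa using this

theorem norm_image_sub_sub_image_add_add_two_smul_fderiv_le (hf : ContDiff ℝ 2 f)
    (hM : ∀ x, ‖iteratedFDeriv ℝ 2 f x‖ ≤ M) (x h : E) :
    ‖f (x - h) - f (x + h) + (2 : ℝ) • fderiv ℝ f x h‖ ≤ M * ‖h‖ ^ 2 := by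
  have hminus := norm_image_add_sub_sub_fderiv_le hf hM x (-h)
  have hplus := norm_image_add_sub_sub_fderiv_le hf hM x h
  rw [norm_neg] at hminus
  calc ‖f (x - h) - f (x + h) + (2 : ℝ) • fderiv ℝ f x h‖
      = ‖(f (x + -h) - f x - fderiv ℝ f x (-h)) - (f (x + h) - f x - fderiv ℝ f x h)‖ := by
        rw [map_neg, ← sub_eq_add_neg, two_smul]; congr 1; abel
    _ ≤ M / 2 * ‖h‖ ^ 2 + M / 2 * ‖h‖ ^ 2 := (norm_sub_le _ _).trans (add_le_add hminus hplus)
    _ = M * ‖h‖ ^ 2 := by ring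

theorem norm_image_sub_smul_sub_image_add_smul_add_smul_fderiv_le (hf : ContDiff ℝ 2 f)
    (hM : ∀ x, ‖iteratedFDeriv ℝ 2 f x‖ ≤ M) (x u : E) (s : ℝ) :
    ‖f (x - s • u) - f (x + s • u) + (2 * s) • fderiv ℝ f x u‖ ≤ M * s ^ 2 * ‖u‖ ^ 2 :=
  calc _ = ‖f (x - s • u) - f (x + s • u) + (2 : ℝ) • fderiv ℝ f x (s • u)‖ := by
        rw [map_smul, smul_smul]
    _ ≤ M * ‖s • u‖ ^ 2 := norm_image_sub_sub_image_add_add_two_smul_fderiv_le hf hM x _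
    _ = M * s ^ 2 * ‖u‖ ^ 2 := by rw [norm_smul, mul_pow, Real.norm_eq_abs, sq_abs, mul_assoc]

end Taylor

theorem norm_tsum_mul_integral_le {ι α R : Type*} [MeasurableSpace α] {ν : Measure α}
    [NormedRing R] [NormedSpace ℝ R] (v : ι → R) (F : ι → α → R) {g : α → R}
    (hg : Integrable g ν) {c : ι → ℝ} (hc : Summable fun i => c i * ‖v i‖)
    (hF : ∀ i x, ‖F i x‖ ≤ c i * ‖g x‖) :
    ‖∑' i, v i * ∫ x, F i x ∂ν‖ ≤ (∑' i, c i * ‖v i‖) * ∫ x, ‖g x‖ ∂ν := by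
  have hterm (i : ι) : ‖v i * ∫ x, F i x ∂ν‖ ≤ c i * ‖v i‖ * ∫ x, ‖g x‖ ∂ν :=
    calc ‖v i * ∫ x, F i x ∂ν‖ ≤ ‖v i‖ * ∫ x, c i * ‖g x‖ ∂ν := by
          refine (norm_mul_le _ _).trans (mul_le_mul_of_nonneg_left ?_ (norm_nonneg _))
          exact norm_integral_le_of_norm_le (hg.norm.const_mul _) (.of_forall (hF i))
      _ = c i * ‖v i‖ * ∫ x, ‖g x‖ ∂ν := by rw [integral_const_mul]; ring
  have hsum : Summable fun i => c i * ‖v i‖ * ∫ x, ‖g x‖ ∂ν := hc.mul_right _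
  calc ‖∑' i, v i * ∫ x, F i x ∂ν‖
      ≤ ∑' i, c i * ‖v i‖ * ∫ x, ‖g x‖ ∂ν := tsum_of_norm_bounded hsum.hasSum hterm
    _ = (∑' i, c i * ‖v i‖) * ∫ x, ‖g x‖ ∂ν := hc.tsum_mul_right _

theorem external_potential_remainder_bound_general (ℏ a : ℝ) (hℏ : 0 < ℏ)
    (v : ℤ × ℤ → ℂ)
    (hv : Summable fun μ : ℤ × ℤ => ‖latticeVec μ‖ ^ 2 * ‖v μ‖)
    (g : EuclideanSpace ℝ (Fin 2) × EuclideanSpace ℝ (Fin 2) → ℂ)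
    (hg : Integrable g)
    (η : EuclideanSpace ℝ (Fin 2) → ℂ)
    (Cη : ℝ) (hCη : ∀ x, ‖η x‖ ≤ Cη)
    (φ : EuclideanSpace ℝ (Fin 2) → ℂ) (hφ : ContDiff ℝ 2 φ)
    (M : ℝ) (hM : ∀ q : EuclideanSpace ℝ (Fin 2), ‖iteratedFDeriv ℝ 2 φ q‖ ≤ M) :
    ‖∑' μ : ℤ × ℤ, v μ *
        ∫ p : EuclideanSpace ℝ (Fin 2) × EuclideanSpace ℝ (Fin 2),
          Complex.exp (Complex.I * (((inner ℝ (latticeVec μ) p.1 : ℝ) / a : ℝ) : ℂ)) *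
            g p * η p.1 * (1 / (ℏ : ℂ)) *
            (φ (p.2 - (ℏ / (2 * a)) • latticeVec μ)
              - φ (p.2 + (ℏ / (2 * a)) • latticeVec μ)
              + ((ℏ / a : ℝ) : ℂ) * fderiv ℝ φ p.2 (latticeVec μ))‖ ≤
      (ℏ / (4 * a ^ 2)) * (∑' μ : ℤ × ℤ, ‖latticeVec μ‖ ^ 2 * ‖v μ‖) *
        (∫ p : EuclideanSpace ℝ (Fin 2) × EuclideanSpace ℝ (Fin 2), ‖g p‖) * Cη * M := by
  set s := ℏ / (2 * a)
  set K := ℏ / (4 * a ^ 2) * Cη * M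
  have hCη0 : 0 ≤ Cη := (norm_nonneg _).trans (hCη 0)
  have hrem (μ : ℤ × ℤ) (k : EuclideanSpace ℝ (Fin 2)) :
      ‖φ (k - s • latticeVec μ) - φ (k + s • latticeVec μ)
        + ((ℏ / a : ℝ) : ℂ) * fderiv ℝ φ k (latticeVec μ)‖ ≤ M * s ^ 2 * ‖latticeVec μ‖ ^ 2 := by
    rw [← Complex.real_smul, show ℏ / a = 2 * s by ring]
    exact norm_image_sub_smul_sub_image_add_smul_add_smul_fderiv_le hφ hM k (latticeVec μ) s
  have hc : Summable fun μ => K * ‖latticeVec μ‖ ^ 2 * ‖v μ‖ := by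
    simpa only [mul_assoc] using hv.mul_left K
  refine (norm_tsum_mul_integral_le v _ hg hc fun μ p => ?_).trans_eq ?_
  · rw [norm_mul, norm_mul, norm_mul, norm_mul, norm_exp_I_mul_ofReal, one_mul, norm_div,
      norm_one, norm_real, Real.norm_of_nonneg hℏ.le]
    calc ‖g p‖ * ‖η p.1‖ * (1 / ℏ) * ‖_‖
        ≤ ‖g p‖ * Cη * (1 / ℏ) * (M * s ^ 2 * ‖latticeVec μ‖ ^ 2) := by
          gcongr
          exacts [hCη p.1, hrem μ p.2]
      _ = K * ‖latticeVec μ‖ ^ 2 * ‖g p‖ := by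
          field_simp
          ring
  · simp only [mul_assoc, tsum_mul_left]
    ring

/-- Weak-form error estimate for the external periodic potential term:
for Fourier coefficients `v̂` with `Σ ‖μ‖²|v̂(μ)| < ∞`, integrable `g`, bounded
measurable `η`, and `φ ∈ C²` with `‖D²φ‖ ≤ M`, the lattice-sum pairing against the
second-order symmetric Taylor remainder of `φ` is bounded by
`(ℏ/(4a²)) (Σ ‖μ‖²|v̂(μ)|) ‖g‖_{L¹} ‖η‖_∞ M`. -/
theorem external_potential_remainder_bound (ℏ a : ℝ) (hℏ : 0 < ℏ) (ha : 0 < a)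
    (v : ℤ × ℤ → ℂ)
    (hv : Summable fun μ : ℤ × ℤ => ‖latticeVec μ‖ ^ 2 * ‖v μ‖)
    (g : EuclideanSpace ℝ (Fin 2) × EuclideanSpace ℝ (Fin 2) → ℂ)
    (hg : Integrable g)
    (η : EuclideanSpace ℝ (Fin 2) → ℂ) (hη : Measurable η)
    (Cη : ℝ) (hCη : ∀ x, ‖η x‖ ≤ Cη)
    (φ : EuclideanSpace ℝ (Fin 2) → ℂ) (hφ : ContDiff ℝ 2 φ)
    (M : ℝ) (hM : ∀ q : EuclideanSpace ℝ (Fin 2), ‖iteratedFDeriv ℝ 2 φ q‖ ≤ M) :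
    ‖∑' μ : ℤ × ℤ, v μ *
        ∫ p : EuclideanSpace ℝ (Fin 2) × EuclideanSpace ℝ (Fin 2),
          Complex.exp (Complex.I * (((inner ℝ (latticeVec μ) p.1 : ℝ) / a : ℝ) : ℂ)) *
            g p * η p.1 * (1 / (ℏ : ℂ)) *
            (φ (p.2 - (ℏ / (2 * a)) • latticeVec μ)
              - φ (p.2 + (ℏ / (2 * a)) • latticeVec μ)
              + ((ℏ / a : ℝ) : ℂ) * fderiv ℝ φ p.2 (latticeVec μ))‖ ≤
      (ℏ / (4 * a ^ 2)) * (∑' μ : ℤ × ℤ, ‖latticeVec μ‖ ^ 2 * ‖v μ‖) *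
        (∫ p : EuclideanSpace ℝ (Fin 2) × EuclideanSpace ℝ (Fin 2), ‖g p‖) * Cη * M :=
  external_potential_remainder_bound_general ℏ a hℏ v hv g hg η Cη hCη φ hφ M hM
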